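/- Let X be a dense linear subspace of ℓ²(S) possessing an orthonormal basis. Then there exists a partition 𝒫 of S into countable sets such that the linear span of ⋃_{A∈𝒫} X↓A is dense in X; i.e., X is the (closure within X of the) orthogonal direct sum of the subspaces X↓A, A ∈ 𝒫. -/

import Mathlib

noncomputable section
open scoped InnerProductSpace ENNReal

/-- An orthonormal subset of an inner product space. -/
def OrthSet (k : Type*) {E : Type*} [RCLike k] [NormedAddCommGroup E]
    [InnerProductSpace k E] (B : Set E) : Prop :=
  Orthonormal k ((↑) : B → E)

/-- A maximal orthonormal system of the whole space. -/
def MaximalOrthSet (k : Type*) {E : Type*} [RCLike k] [NormedAddCommGroup E]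
    [InnerProductSpace k E] (B : Set E) : Prop :=
  OrthSet k B ∧ ∀ C : Set E, B ⊆ C → OrthSet k C → C = B

/-- An orthonormal basis (as a set): an orthonormal system whose linear span is dense. -/
def IsOrthBasisSet (k : Type*) {E : Type*} [RCLike k] [NormedAddCommGroup E]
    [InnerProductSpace k E] (B : Set E) : Prop :=
  OrthSet k B ∧ Dense (Submodule.span k B : Set E)

/-- The space has an orthonormal basis (is non-pathological). -/
def HasOrthBasis (k E : Type*) [RCLike k] [NormedAddCommGroup E]
    [InnerProductSpace k E] : Prop :=
  ∃ B : Set E, IsOrthBasisSet k B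

/-- Density: least cardinality of a dense subset. -/
def densityCard (E : Type*) [TopologicalSpace E] : Cardinal :=
  sInf { c | ∃ D : Set E, Dense D ∧ Cardinal.mk D = c }

/-- A maximal orthonormal system of a subspace `X`. -/
def MaximalOrthIn (k : Type*) {E : Type*} [RCLike k] [NormedAddCommGroup E]
    [InnerProductSpace k E] (X : Submodule k E) (B : Set E) : Prop :=
  B ⊆ X ∧ OrthSet k B ∧ ∀ C : Set E, C ⊆ X → B ⊆ C → OrthSet k C → C = B

/-- An orthonormal basis of the subspace `X`: an orthonormal subset of `X`
whose linear span is dense in `X`. -/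
def IsOrthBasisOf (k : Type*) {E : Type*} [RCLike k] [NormedAddCommGroup E]
    [InnerProductSpace k E] (X : Submodule k E) (B : Set E) : Prop :=
  B ⊆ X ∧ OrthSet k B ∧ (X : Set E) ⊆ closure (Submodule.span k B : Set E)

/-- `X₀` is an orthogonal direct summand of `X`. -/
def IsOrthSummand (k : Type*) {E : Type*} [RCLike k] [NormedAddCommGroup E]
    [InnerProductSpace k E] (X X₀ : Submodule k E) : Prop :=
  ∃ X'' : Submodule k E, X'' ≤ X ∧ (∀ u ∈ X₀, ∀ v ∈ X'', (inner k u v : k) = 0) ∧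
    X₀ ⊔ X'' = X

/-- The closed subspace of `ℓ²(S)` of vectors with support contained in `A`. -/
def lpRes (k : Type*) {S : Type*} [RCLike k] (A : Set S) :
    Submodule k (lp (fun _ : S => k) 2) where
  carrier := {u | ∀ s ∉ A, u s = 0}
  zero_mem' := by intro s _; simp
  add_mem' := by intro a b ha hb s hs; simp [lp.coeFn_add, ha s hs, hb s hs]
  smul_mem' := by intro c a ha s hs; simp [lp.coeFn_smul, ha s hs]

/-- The truncation `u↓A` of `u ∈ ℓ²(S)` to a subset `A ⊆ S`. -/
def lpTrunc {k : Type*} {S : Type*} [RCLike k] (u : lp (fun _ : S => k) 2) (A : Set S) :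
    lp (fun _ : S => k) 2 :=
  ⟨A.indicator ⇑u, by
    refine memℓp_gen ?_
    have hs : Summable fun s => ‖u s‖ ^ (2 : ℝ≥0∞).toReal :=
      (memℓp_gen_iff (by norm_num)).1 (lp.memℓp u)
    refine hs.of_nonneg_of_le (fun s => by positivity) (fun s => ?_)
    by_cases hsA : s ∈ A
    · simp [Set.indicator, hsA]
    · simp only [Set.indicator, hsA, if_false, norm_zero]
      rw [Real.zero_rpow (by norm_num)]
      positivity⟩

/-!
Call two points of `S` linked when some vector of the orthonormal basis `ℬ` is nonzero at both.
Each support is countable, and by Bessel's inequality against `lp.single 2 s 1` each point lies in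
the support of only countably many vectors of `ℬ`; hence the classes of the equivalence relation
generated by linking are countable. Every `b ∈ ℬ` lies in `X↓A` for the class `A` containing its
support, so the span of `ℬ`, which is dense in `X`, lies in the span of the `X↓A`.
-/

open Relation

theorem Relation.countable_setOf_reflTransGen {α : Type*} {r : α → α → Prop}
    (hr : ∀ a, {b | r a b}.Countable) (a : α) :
    {b | ReflTransGen r a b}.Countable := by
  let step : Set α → Set α := fun C => C ∪ ⋃ c ∈ C, {b | r c b}
  have hstep : ∀ n, (step^[n] {a}).Countable := by
    intro n
    induction n with
    | zero => exact Set.countable_singleton a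
    | succ n ih =>
      rw [Function.iterate_succ_apply']
      exact ih.union (ih.biUnion fun c _ => hr c)
  refine (Set.countable_iUnion hstep).mono fun b hab => ?_
  induction hab with
  | refl => exact Set.mem_iUnion.2 ⟨0, rfl⟩
  | tail _ hbc ih =>
    obtain ⟨n, hb⟩ := Set.mem_iUnion.1 ih
    refine Set.mem_iUnion.2 ⟨n + 1, ?_⟩
    rw [Function.iterate_succ_apply']
    exact Or.inr (Set.mem_biUnion hb hbc)

theorem Relation.countable_setOf_eqvGen {α : Type*} {r : α → α → Prop}
    (hr : ∀ a, {b | r a b}.Countable) (hr' : ∀ b, {a | r a b}.Countable) (a : α) :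
    {b | EqvGen r a b}.Countable := by
  simp only [← EqvGen.reflTransGen_symmGen]
  exact countable_setOf_reflTransGen (fun c => (hr c).union (hr' c)) a

theorem Set.exists_isPartition_countable_of_pointCountable {ι α : Type*} (t : ι → Set α)
    (ht : ∀ i, (t i).Countable) (hpt : ∀ a, {i | a ∈ t i}.Countable) :
    ∃ P : Set (Set α), Setoid.IsPartition P ∧ (∀ A ∈ P, A.Countable) ∧
      ∀ i, (t i).Nonempty → ∃ A ∈ P, t i ⊆ A := by
  let r : α → α → Prop := fun a b => ∃ i, a ∈ t i ∧ b ∈ t i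
  have hr : ∀ a, {b | r a b}.Countable := fun a =>
    ((hpt a).biUnion fun i _ => ht i).mono fun _ ⟨i, hai, hbi⟩ => Set.mem_biUnion hai hbi
  have hr' : ∀ b, {a | r a b}.Countable := by
    intro b
    refine (hr b).mono ?_
    rintro a ⟨i, hai, hbi⟩
    exact ⟨i, hbi, hai⟩
  refine ⟨(EqvGen.setoid r).classes, Setoid.isPartition_classes _, ?_, ?_⟩
  · rintro _ ⟨a, rfl⟩
    exact (countable_setOf_eqvGen hr hr' a).mono fun b hba => EqvGen.symm _ _ hba
  · rintro i ⟨a, hai⟩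
    exact ⟨_, Setoid.mem_classes _ a, fun b hbi => EqvGen.rel _ _ ⟨i, hbi, hai⟩⟩

theorem Memℓp.countable_setOf_ne_zero {α : Type*} {E : α → Type*}
    [∀ i, NormedAddCommGroup (E i)] {p : ℝ≥0∞} {f : ∀ i, E i} (hf : Memℓp f p) (hp : p ≠ ∞) :
    {i | f i ≠ 0}.Countable := by
  rcases eq_or_ne p 0 with rfl | hp₀
  · exact (memℓp_zero_iff.1 hf).countable
  · have hp' : 0 < p.toReal := ENNReal.toReal_pos hp₀ hp
    refine ((memℓp_gen_iff hp').1 hf).countable_support.mono fun i hi => ?_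
    exact (Real.rpow_pos_of_pos (norm_pos_iff.2 hi) _).ne'

theorem Orthonormal.countable_setOf_apply_ne_zero {k S ι : Type*} [RCLike k]
    {v : ι → lp (fun _ : S => k) 2} (hv : Orthonormal k v) (s : S) :
    {i | v i s ≠ 0}.Countable := by
  classical
  refine (hv.inner_products_summable (x := lp.single 2 s (1 : k))).countable_support.mono
    fun i hi => ?_
  simpa [lp.inner_single_right] using hi

theorem lp.exists_apply_ne_zero {α : Type*} {E : α → Type*} [∀ i, NormedAddCommGroup (E i)]
    {p : ℝ≥0∞} {f : lp E p} (hf : f ≠ 0) : ∃ i, f i ≠ 0 := by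
  by_contra! h
  exact hf (lp.ext (funext h))

theorem stmt15 {k : Type*} [RCLike k] {S : Type*}
    (X : Submodule k (lp (fun _ : S => k) 2))
    (hONB : ∃ ℬ, IsOrthBasisOf k X ℬ) :
    ∃ Part : Set (Set S),
      (∀ A ∈ Part, A.Countable) ∧
      (⋃₀ Part) = Set.univ ∧
      (Part.Pairwise Disjoint) ∧
      (X : Set (lp (fun _ : S => k) 2)) ⊆
        closure ((⨆ A ∈ Part, X ⊓ lpRes k A : Submodule k (lp (fun _ : S => k) 2)) :
          Set (lp (fun _ : S => k) 2)) := by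
  obtain ⟨ℬ, hℬX, hℬ, hℬdense⟩ := hONB
  obtain ⟨Part, hPart, hcount, hsupp⟩ :=
    Set.exists_isPartition_countable_of_pointCountable
      (fun b : ℬ => {s | (b : lp (fun _ : S => k) 2) s ≠ 0})
      (fun b => (lp.memℓp _).countable_setOf_ne_zero ENNReal.ofNat_ne_top)
      hℬ.countable_setOf_apply_ne_zero
  refine ⟨Part, hcount, hPart.sUnion_eq_univ, hPart.pairwiseDisjoint, ?_⟩
  refine Set.Subset.trans hℬdense (closure_mono ?_)
  rw [SetLike.coe_subset_coe, Submodule.span_le]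
  intro b hb
  obtain ⟨A, hA, hbA⟩ := hsupp ⟨b, hb⟩ (lp.exists_apply_ne_zero (hℬ.ne_zero ⟨b, hb⟩))
  have hbXA : b ∈ X ⊓ lpRes k A := ⟨hℬX hb, fun s hs => by_contra fun hbs => hs (hbA hbs)⟩
  exact Submodule.mem_iSup_of_mem A (Submodule.mem_iSup_of_mem hA hbXA)
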